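/- arXiv:2011.04221 — 5 statements merged into one kernel-verified Lean document; each statement's English description precedes it below -/
import Mathlib

section
/- For any real numbers m and t with t > 1 and m ≥ t, we have m - (t - √(t(t-1))) ≤ √(m(m-1)) ≤ m - 1/2. -/
/-!
Since `x * (x - 1) = (x - 1/2)^2 - 1/4`, the upper bound is immediate. For the lower bound,
`x - √(x * (x - 1))` is antitone on `[1, ∞)`; comparing its values at `t ≤ m` and squaring
reduces this to `(m - t) * (2 √(t * (t - 1)) - 2 t + 1) ≤ 0`, i.e. to the upper bound at `t`.
-/

open Real Set

theorem sqrt_mul_sub_one_le {x : ℝ} (hx : 1 / 2 ≤ x) : √(x * (x - 1)) ≤ x - 1 / 2 :=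
  sqrt_le_iff.mpr ⟨by linarith, by nlinarith⟩

theorem antitoneOn_sub_sqrt_mul_sub_one :
    AntitoneOn (fun x : ℝ => x - √(x * (x - 1))) (Ici 1) := by
  intro t ht m _ htm
  rw [mem_Ici] at ht
  have hs_le : √(t * (t - 1)) ≤ t - 1 / 2 := sqrt_mul_sub_one_le (by linarith)
  have hs_sq : √(t * (t - 1)) ^ 2 = t * (t - 1) := sq_sqrt (by nlinarith)
  have hsq : (m - t + √(t * (t - 1))) ^ 2 ≤ m * (m - 1) := by
    nlinarith [mul_nonneg (sub_nonneg.2 htm) (sub_nonneg.2 hs_le)]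
  show m - √(m * (m - 1)) ≤ t - √(t * (t - 1))
  linarith [(le_abs_self _).trans (abs_le_sqrt hsq)]

theorem stmt0 (m t : ℝ) (ht : 1 < t) (hmt : t ≤ m) :
    m - (t - Real.sqrt (t * (t - 1))) ≤ Real.sqrt (m * (m - 1)) ∧
      Real.sqrt (m * (m - 1)) ≤ m - 1 / 2 := by
  have hm : 1 < m := ht.trans_le hmt
  have h_anti : m - √(m * (m - 1)) ≤ t - √(t * (t - 1)) :=
    antitoneOn_sub_sqrt_mul_sub_one (mem_Ici.2 ht.le) (mem_Ici.2 hm.le) hmt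
  exact ⟨by linarith, sqrt_mul_sub_one_le (by linarith)⟩
end

section
/- Let a_1, ..., a_r be the points (s/√2)·e_1, ..., (s/√2)·e_r in ℝ^r (scaled standard basis vectors, forming a regular simplex of side length s > 0, r ≥ 2). Then the minimum over c ∈ ℝ^r of ∑_{i=1}^r ‖a_i - c‖ equals s·√(r(r-1)/2), and it is attained at the centroid c = (s/(r√2), ..., s/(r√2)). -/
/-- The vertices of a regular simplex of side length `s`: scaled standard basis vectors. -/
noncomputable def simplexPoint (r : ℕ) (s : ℝ) (i : Fin r) : EuclideanSpace ℝ (Fin r) :=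
  EuclideanSpace.single i (s / Real.sqrt 2)

/-- The centroid of the simplex vertices. -/
noncomputable def simplexCentroid (r : ℕ) (s : ℝ) : EuclideanSpace ℝ (Fin r) :=
  (WithLp.equiv 2 (Fin r → ℝ)).symm (fun _ => s / (r * Real.sqrt 2))

/-!
If `c₀` is at the same distance `d > 0` from every `p i` and `∑ (p i - c₀) = 0`, then `c₀` minimises
`c ↦ ∑ ‖p i - c‖`: by Cauchy–Schwarz,
`d ∑ ‖p i - c‖ ≥ ∑ ⟪p i - c, p i - c₀⟫ = ∑ ⟪p i - c₀, p i - c₀⟫ + ⟪c₀ - c, ∑ (p i - c₀)⟫ = d ∑ ‖p i - c₀‖`.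
The centroid of the simplex is such a point, at distance `s √((r - 1) / (2r))` from each vertex.
-/

open Finset
open scoped InnerProductSpace

theorem sum_norm_sub_le_sum_norm_sub_of_equidistant_of_sum_sub_eq_zero
    {ι E : Type*} [NormedAddCommGroup E] [InnerProductSpace ℝ E]
    (S : Finset ι) (p : ι → E) (c₀ : E) (d : ℝ)
    (hd : ∀ i ∈ S, ‖p i - c₀‖ = d) (hsum : ∑ i ∈ S, (p i - c₀) = 0) (c : E) :
    ∑ i ∈ S, ‖p i - c₀‖ ≤ ∑ i ∈ S, ‖p i - c‖ := by
  rw [sum_congr rfl hd]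
  rcases S.eq_empty_or_nonempty with rfl | ⟨i₀, hi₀⟩
  · simp
  have hd₀ : 0 ≤ d := hd i₀ hi₀ ▸ norm_nonneg _
  rcases hd₀.eq_or_lt with rfl | hd_pos
  · simpa using sum_nonneg fun i _ => norm_nonneg (p i - c)
  refine le_of_mul_le_mul_left ?_ hd_pos
  calc d * ∑ i ∈ S, d = ∑ i ∈ S, ⟪p i - c₀, p i - c₀⟫_ℝ := by
        rw [mul_sum]
        refine sum_congr rfl fun i hi => ?_
        rw [real_inner_self_eq_norm_sq, hd i hi, sq]
    _ = ∑ i ∈ S, ⟪p i - c, p i - c₀⟫_ℝ + ⟪c - c₀, ∑ i ∈ S, (p i - c₀)⟫_ℝ := by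
        rw [inner_sum, ← sum_add_distrib]
        refine sum_congr rfl fun i _ => ?_
        rw [← inner_add_left, sub_add_sub_cancel]
    _ = ∑ i ∈ S, ⟪p i - c, p i - c₀⟫_ℝ := by rw [hsum, inner_zero_right, add_zero]
    _ ≤ ∑ i ∈ S, ‖p i - c‖ * ‖p i - c₀‖ := sum_le_sum fun i _ => real_inner_le_norm _ _
    _ = d * ∑ i ∈ S, ‖p i - c‖ := by
        rw [mul_sum]
        refine sum_congr rfl fun i hi => ?_
        rw [hd i hi, mul_comm]

theorem simplexPoint_sub_simplexCentroid_apply (r : ℕ) (s : ℝ) (i j : Fin r) :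
    (simplexPoint r s i - simplexCentroid r s) j
      = (if j = i then s / Real.sqrt 2 else 0) - s / Real.sqrt 2 / r := by
  simp [simplexPoint, simplexCentroid, div_div, mul_comm]

theorem sum_simplexPoint_sub_simplexCentroid (r : ℕ) (s : ℝ) :
    ∑ i, (simplexPoint r s i - simplexCentroid r s) = 0 := by
  ext j
  have hr : (r : ℝ) ≠ 0 := by have := j.pos; positivity
  rw [WithLp.ofLp_sum, Finset.sum_apply]
  simp only [simplexPoint_sub_simplexCentroid_apply]
  rw [sum_sub_distrib, sum_ite_eq, sum_const, card_univ, Fintype.card_fin, nsmul_eq_mul,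
    mul_div_cancel₀ _ hr]
  simp

theorem norm_simplexPoint_sub_simplexCentroid (r : ℕ) (s : ℝ) (i : Fin r) :
    ‖simplexPoint r s i - simplexCentroid r s‖ = |s| * Real.sqrt ((r - 1) / (2 * r)) := by
  have hr : (r : ℝ) ≠ 0 := by have := i.pos; positivity
  have hsq : ∑ j, (simplexPoint r s i - simplexCentroid r s) j ^ 2
      = s ^ 2 * ((r - 1) / (2 * r)) := by
    simp only [simplexPoint_sub_simplexCentroid_apply, sub_sq, ite_pow, ne_eq, OfNat.ofNat_ne_zero, not_false_eq_true, zero_pow, mul_ite,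
      mul_zero, ite_mul, zero_mul, sum_add_distrib, sum_sub_distrib, sum_ite_eq', mem_univ,
      ↓reduceIte, sum_const, card_univ, Fintype.card_fin, nsmul_eq_mul]
    field_simp
    rw [Real.sq_sqrt zero_le_two]
    ring
  rw [EuclideanSpace.norm_eq]
  simp only [Real.norm_eq_abs, sq_abs, hsq, Real.sqrt_mul (sq_nonneg s), Real.sqrt_sq_eq_abs]

theorem stmt2_general (r : ℕ) (s : ℝ) (hs : 0 < s) :
    (∑ i : Fin r, ‖simplexPoint r s i - simplexCentroid r s‖)
        = s * Real.sqrt ((r : ℝ) * ((r : ℝ) - 1) / 2) ∧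
    ∀ c : EuclideanSpace ℝ (Fin r),
      (∑ i : Fin r, ‖simplexPoint r s i - simplexCentroid r s‖) ≤
        ∑ i : Fin r, ‖simplexPoint r s i - c‖ := by
  refine ⟨?_, sum_norm_sub_le_sum_norm_sub_of_equidistant_of_sum_sub_eq_zero _ _ _ _
    (fun i _ => norm_simplexPoint_sub_simplexCentroid r s i)
    (sum_simplexPoint_sub_simplexCentroid r s)⟩
  rcases Nat.eq_zero_or_pos r with rfl | hr
  · simp
  have hval : (r : ℝ) * Real.sqrt ((r - 1) / (2 * r)) = Real.sqrt (r * (r - 1) / 2) := by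
    nth_rw 1 [← Real.sqrt_sq (Nat.cast_nonneg r)]
    rw [← Real.sqrt_mul (sq_nonneg _)]
    congr 1
    field_simp
  simp only [norm_simplexPoint_sub_simplexCentroid, sum_const, card_univ, Fintype.card_fin,
    nsmul_eq_mul, abs_of_pos hs]
  rw [← hval]
  ring

theorem stmt2 (r : ℕ) (hr : 2 ≤ r) (s : ℝ) (hs : 0 < s) :
    (∑ i : Fin r, ‖simplexPoint r s i - simplexCentroid r s‖)
        = s * Real.sqrt ((r : ℝ) * ((r : ℝ) - 1) / 2) ∧
    ∀ c : EuclideanSpace ℝ (Fin r),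
      (∑ i : Fin r, ‖simplexPoint r s i - simplexCentroid r s‖) ≤
        ∑ i : Fin r, ‖simplexPoint r s i - c‖ :=
  stmt2_general r s hs
end

section
/- Let G be a finite simple graph, let M be a maximum matching of G, let F' be the graph obtained by deleting the edges of M from G, and let L be a maximum matching of F'. Then G has a vertex cover of size at most |M| + |L|. -/
/-!
Let `s` be the vertex set of `L`. Maximality of `L` makes `s` a vertex cover of `G - M`, so the only
edges of `G` missed by `s` are the edges `E₀` of `M` with no endpoint in `s`. Adding one endpoint of
each edge of `E₀` to `s` gives a vertex cover of size at most `2|L| + |E₀|`. Since `L ∪ E₀` is a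
matching of `G`, maximality of `M` gives `|L| + |E₀| ≤ |M|`, whence the bound `|M| + |L|`.
-/

namespace SimpleGraph

variable {V : Type*} {G H : SimpleGraph V}

lemma IsVertexCover.exists_mem_of_mem_edgeSet {c : Set V} (hc : G.IsVertexCover c)
    {e : Sym2 V} (he : e ∈ G.edgeSet) : ∃ v ∈ c, v ∈ e := by
  induction e with
  | _ v w =>
    rcases hc he with hv | hw
    · exact ⟨v, hv, Sym2.mem_mk_left v w⟩
    · exact ⟨w, hw, Sym2.mem_mk_right v w⟩

namespace Subgraph

/-- Only the endpoints of the surviving edges are kept as vertices, so that a matching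
restricts to a matching. -/
def edgesAvoiding (M : G.Subgraph) (s : Set V) : G.Subgraph where
  verts := {v | ∃ w, M.Adj v w ∧ v ∉ s ∧ w ∉ s}
  Adj v w := M.Adj v w ∧ v ∉ s ∧ w ∉ s
  adj_sub h := M.adj_sub h.1
  edge_vert h := ⟨_, h⟩
  symm := ⟨fun _ _ ⟨h, hv, hw⟩ ↦ ⟨h.symm, hw, hv⟩⟩

variable {M : G.Subgraph} {s : Set V}

@[simp]
lemma edgesAvoiding_adj {v w : V} : (M.edgesAvoiding s).Adj v w ↔ M.Adj v w ∧ v ∉ s ∧ w ∉ s :=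
  Iff.rfl

lemma mem_edgeSet_edgesAvoiding {e : Sym2 V} :
    e ∈ (M.edgesAvoiding s).edgeSet ↔ e ∈ M.edgeSet ∧ ∀ v ∈ e, v ∉ s := by
  induction e with
  | _ v w => simp

lemma disjoint_verts_edgesAvoiding : Disjoint s (M.edgesAvoiding s).verts :=
  Set.disjoint_right.mpr fun _ ⟨_, _, hv, _⟩ ↦ hv

lemma IsMatching.edgesAvoiding (hM : M.IsMatching) (s : Set V) :
    (M.edgesAvoiding s).IsMatching := by
  rintro v ⟨w, hvw, hv, hw⟩
  exact ⟨w, ⟨hvw, hv, hw⟩, fun u hu ↦ hM.eq_of_adj_left hu.1 hvw⟩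

lemma IsMatching.ncard_verts_le [Finite V] (hM : M.IsMatching) :
    M.verts.ncard ≤ 2 * M.edgeSet.ncard := by
  have hsub : M.verts ⊆ (·.out.1) '' M.edgeSet ∪ (·.out.2) '' M.edgeSet := by
    intro v hv
    obtain ⟨w, hvw, -⟩ := hM hv
    have hmem : v ∈ s(v, w) := Sym2.mem_mk_left v w
    rw [← Quot.out_eq s(v, w)] at hmem
    rcases Sym2.mem_iff.mp hmem with h | h
    · exact Or.inl ⟨s(v, w), hvw, h.symm⟩
    · exact Or.inr ⟨s(v, w), hvw, h.symm⟩
  calc M.verts.ncard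
      ≤ ((·.out.1) '' M.edgeSet ∪ (·.out.2) '' M.edgeSet).ncard := Set.ncard_le_ncard hsub
    _ ≤ ((·.out.1) '' M.edgeSet).ncard + ((·.out.2) '' M.edgeSet).ncard := Set.ncard_union_le _ _
    _ ≤ 2 * M.edgeSet.ncard := by
      have h₁ := Set.ncard_image_le (f := fun e : Sym2 V ↦ e.out.1) (s := M.edgeSet)
      have h₂ := Set.ncard_image_le (f := fun e : Sym2 V ↦ e.out.2) (s := M.edgeSet)
      omega

lemma IsMatching.isVertexCover_verts [Finite V] {L : H.Subgraph} (hL : L.IsMatching)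
    (hLmax : ∀ N : H.Subgraph, N.IsMatching → N.edgeSet.ncard ≤ L.edgeSet.ncard) :
    H.IsVertexCover L.verts := by
  intro v w hvw
  by_contra! hvw_free
  have hedge := IsMatching.subgraphOfAdj hvw
  have hN : (L ⊔ H.subgraphOfAdj hvw).IsMatching := by
    refine hL.sup hedge ?_
    rw [hL.support_eq_verts, hedge.support_eq_verts, subgraphOfAdj_verts]
    simpa [Set.disjoint_right] using hvw_free
  have hnew : s(v, w) ∉ L.edgeSet :=
    fun he ↦ hvw_free.1 (L.mem_verts_of_mem_edge he (Sym2.mem_mk_left v w))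
  have hle := hLmax _ hN
  rw [edgeSet_sup, edgeSet_subgraphOfAdj, Set.union_singleton,
    Set.ncard_insert_of_notMem hnew] at hle
  omega

lemma IsMatching.ncard_edgeSet_add_ncard_edgesAvoiding_le [Finite V] (hHG : H ≤ G)
    {L : H.Subgraph} (hL : L.IsMatching) (hM : M.IsMatching)
    (hMmax : ∀ N : G.Subgraph, N.IsMatching → N.edgeSet.ncard ≤ M.edgeSet.ncard) :
    L.edgeSet.ncard + (M.edgesAvoiding L.verts).edgeSet.ncard ≤ M.edgeSet.ncard := by
  set L' := L.map (Hom.ofLE hHG)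
  have hL'verts : L'.verts = L.verts := by simp [L']
  have hL'edges : L'.edgeSet = L.edgeSet := by simp [L']
  have hN : (L' ⊔ M.edgesAvoiding L.verts).IsMatching := by
    refine (hL.map_ofLE hHG).sup (hM.edgesAvoiding _) ?_
    rw [(hL.map_ofLE hHG).support_eq_verts, (hM.edgesAvoiding _).support_eq_verts, hL'verts]
    exact disjoint_verts_edgesAvoiding
  have hdisj : Disjoint L.edgeSet (M.edgesAvoiding L.verts).edgeSet :=
    Set.disjoint_left.mpr fun e he he' ↦ (mem_edgeSet_edgesAvoiding.mp he').2 _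
      e.out_fst_mem (L.mem_verts_of_mem_edge he e.out_fst_mem)
  calc L.edgeSet.ncard + (M.edgesAvoiding L.verts).edgeSet.ncard
      = (L' ⊔ M.edgesAvoiding L.verts).edgeSet.ncard := by
        rw [edgeSet_sup, hL'edges, Set.ncard_union_eq hdisj]
    _ ≤ M.edgeSet.ncard := hMmax _ hN

end Subgraph

lemma isVertexCover_union_image_edgesAvoiding {M : G.Subgraph} {s : Set V}
    (hs : (G.deleteEdges M.edgeSet).IsVertexCover s) :
    G.IsVertexCover (s ∪ (·.out.1) '' (M.edgesAvoiding s).edgeSet) := by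
  intro v w hvw
  by_cases hv : v ∈ s
  · exact Or.inl (Or.inl hv)
  by_cases hw : w ∈ s
  · exact Or.inr (Or.inl hw)
  by_cases hMvw : M.Adj v w
  · have he : s(v, w) ∈ (M.edgesAvoiding s).edgeSet := ⟨hMvw, hv, hw⟩
    rcases Sym2.mem_iff.mp s(v, w).out_fst_mem with h | h
    · exact Or.inl (Or.inr ⟨_, he, h⟩)
    · exact Or.inr (Or.inr ⟨_, he, h⟩)
  · exact (hs (deleteEdges_adj.mpr ⟨hvw, hMvw⟩)).elim (absurd · hv) (absurd · hw)

end SimpleGraph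

open SimpleGraph Subgraph

theorem stmt7 {V : Type*} [Fintype V] (G : SimpleGraph V)
    (M : G.Subgraph) (hM : M.IsMatching)
    (hMmax : ∀ N : G.Subgraph, N.IsMatching → N.edgeSet.ncard ≤ M.edgeSet.ncard)
    (L : (G.deleteEdges M.edgeSet).Subgraph) (hL : L.IsMatching)
    (hLmax : ∀ N : (G.deleteEdges M.edgeSet).Subgraph, N.IsMatching →
      N.edgeSet.ncard ≤ L.edgeSet.ncard) :
    ∃ C : Set V, (∀ e ∈ G.edgeSet, ∃ v ∈ C, v ∈ e) ∧
      C.ncard ≤ M.edgeSet.ncard + L.edgeSet.ncard := by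
  set E₀ := (M.edgesAvoiding L.verts).edgeSet
  have hcover : G.IsVertexCover (L.verts ∪ (·.out.1) '' E₀) :=
    isVertexCover_union_image_edgesAvoiding (hL.isVertexCover_verts hLmax)
  have hcount : L.edgeSet.ncard + E₀.ncard ≤ M.edgeSet.ncard :=
    hL.ncard_edgeSet_add_ncard_edgesAvoiding_le (G.deleteEdges_le _) hM hMmax
  refine ⟨_, fun e he ↦ hcover.exists_mem_of_mem_edgeSet he, ?_⟩
  calc (L.verts ∪ (·.out.1) '' E₀).ncard
      ≤ L.verts.ncard + ((·.out.1) '' E₀).ncard := Set.ncard_union_le _ _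
    _ ≤ 2 * L.edgeSet.ncard + E₀.ncard := add_le_add hL.ncard_verts_le Set.ncard_image_le
    _ ≤ M.edgeSet.ncard + L.edgeSet.ncard := by omega
end

section
/- For every integer r ≥ 2, √(r(r-1)) + √(3 + 1/(r-1)) − √(r/(r-1)) ≥ r. Moreover, for r ≥ 3 the left-hand side is at least r + 0.095, and for r ≥ 4 it is at least r + 0.135. -/
/-!
Put `u = 1 / (x - 1)`, so `0 < u ≤ 1` for `x ≥ 2`. Bounding the three roots by
`√(x(x-1)) ≥ x - 1/2 - u/8`, by the chord of the concave `√` on `[3, 4]`, and by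
`√(1 + u) ≤ 1 + u/2` gives `sqrtExpr x - x ≥ √3 - 3/2 - (√3 - 11/8) u`, which exceeds `0.135`
once `u ≤ 1/4`, i.e. `x ≥ 5`. The cases `r = 2, 3, 4` are checked numerically.
-/

open Real

noncomputable def sqrtExpr (x : ℝ) : ℝ :=
  √(x * (x - 1)) + √(3 + 1 / (x - 1)) - √(x / (x - 1))

lemma sub_half_sub_le_sqrt_mul_sub_one {x : ℝ} (hx : 9 / 8 ≤ x) :
    x - 1 / 2 - 1 / (8 * (x - 1)) ≤ √(x * (x - 1)) := by
  apply le_sqrt_of_sq_le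
  have hx1 : 0 < x - 1 := by linarith
  have key : (x - 1 / 2 - 1 / (8 * (x - 1))) ^ 2 =
      x * (x - 1) - (8 - 1 / (x - 1)) / (64 * (x - 1)) := by
    field_simp; ring
  have : 1 / (x - 1) ≤ 8 := by rw [div_le_iff₀ hx1]; linarith
  rw [key, sub_le_self_iff]
  apply div_nonneg <;> linarith

lemma sqrt_three_add_chord {u : ℝ} (hu₀ : 0 ≤ u) (hu₁ : u ≤ 1) :
    √3 + (2 - √3) * u ≤ √(3 + u) := by
  have h := strictConcaveOn_sqrt.concaveOn.2 (show (3 : ℝ) ∈ Set.Ici 0 by norm_num)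
    (show (4 : ℝ) ∈ Set.Ici 0 by norm_num) (sub_nonneg.2 hu₁) hu₀ (sub_add_cancel 1 u)
  have h4 : √(4 : ℝ) = 2 := by
    rw [show (4 : ℝ) = 2 ^ 2 by norm_num, sqrt_sq zero_le_two]
  simp only [smul_eq_mul, h4] at h
  calc √3 + (2 - √3) * u = (1 - u) * √3 + u * 2 := by ring
    _ ≤ √((1 - u) * 3 + u * 4) := h
    _ = √(3 + u) := by ring_nf

lemma sqrt_div_sub_one_le {x : ℝ} (hx : 1 < x) :
    √(x / (x - 1)) ≤ 1 + 1 / (2 * (x - 1)) := by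
  have hx1 : 0 < x - 1 := by linarith
  have h := sqrt_one_add_le (x := 1 / (x - 1)) (by have := one_div_pos.2 hx1; linarith)
  convert h using 2
  · field_simp; ring
  · field_simp

lemma add_sub_le_sqrtExpr {x : ℝ} (hx : 2 ≤ x) :
    x + √3 - 3 / 2 - (√3 - 11 / 8) / (x - 1) ≤ sqrtExpr x := by
  have hx1 : 0 < x - 1 := by linarith
  have hu₁ : 1 / (x - 1) ≤ 1 := by rw [div_le_one hx1]; linarith
  have hprod := sub_half_sub_le_sqrt_mul_sub_one (x := x) (by linarith)
  have hchord := sqrt_three_add_chord (one_div_pos.2 hx1).le hu₁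
  have hquot := sqrt_div_sub_one_le (x := x) (by linarith)
  have e1 : 1 / (8 * (x - 1)) = 1 / (x - 1) / 8 := by field_simp
  have e2 : 1 / (2 * (x - 1)) = 1 / (x - 1) / 2 := by field_simp
  have e3 : (√3 - 11 / 8) / (x - 1) = (√3 - 11 / 8) * (1 / (x - 1)) := by ring
  rw [sqrtExpr, e3]
  rw [e1] at hprod
  rw [e2] at hquot
  linarith

lemma sqrtExpr_ge_of_five_le {x : ℝ} (hx : 5 ≤ x) : x + 0.135 ≤ sqrtExpr x := by
  have hs : 1.732 ≤ √3 := le_sqrt_of_sq_le (by norm_num)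
  have h := add_sub_le_sqrtExpr (x := x) (by linarith)
  have : (√3 - 11 / 8) / (x - 1) ≤ (√3 - 11 / 8) / 4 :=
    div_le_div_of_nonneg_left (by linarith) (by norm_num) (by linarith)
  linarith

lemma sqrtExpr_two : sqrtExpr 2 = 2 := by norm_num [sqrtExpr]

lemma sqrtExpr_three : 3.095 ≤ sqrtExpr 3 := by
  have h₁ : 2.4494 ≤ √(3 * (3 - 1) : ℝ) := le_sqrt_of_sq_le (by norm_num)
  have h₂ : 1.87082 ≤ √(3 + 1 / (3 - 1) : ℝ) := le_sqrt_of_sq_le (by norm_num)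
  have h₃ : √(3 / (3 - 1) : ℝ) ≤ 1.22475 := (sqrt_le_left (by norm_num)).2 (by norm_num)
  rw [sqrtExpr]; linarith

lemma sqrtExpr_four : 4.135 ≤ sqrtExpr 4 := by
  have h₁ : 3.4641 ≤ √(4 * (4 - 1) : ℝ) := le_sqrt_of_sq_le (by norm_num)
  have h₂ : 1.82574 ≤ √(3 + 1 / (4 - 1) : ℝ) := le_sqrt_of_sq_le (by norm_num)
  have h₃ : √(4 / (4 - 1) : ℝ) ≤ 1.15471 := (sqrt_le_left (by norm_num)).2 (by norm_num)
  rw [sqrtExpr]; linarith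

theorem stmt10 (r : ℕ) (hr : 2 ≤ r) :
    (Real.sqrt ((r : ℝ) * ((r : ℝ) - 1)) + Real.sqrt (3 + 1 / ((r : ℝ) - 1)) -
        Real.sqrt ((r : ℝ) / ((r : ℝ) - 1)) ≥ (r : ℝ)) ∧
    (3 ≤ r →
      Real.sqrt ((r : ℝ) * ((r : ℝ) - 1)) + Real.sqrt (3 + 1 / ((r : ℝ) - 1)) -
        Real.sqrt ((r : ℝ) / ((r : ℝ) - 1)) ≥ (r : ℝ) + 0.095) ∧
    (4 ≤ r →
      Real.sqrt ((r : ℝ) * ((r : ℝ) - 1)) + Real.sqrt (3 + 1 / ((r : ℝ) - 1)) -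
        Real.sqrt ((r : ℝ) / ((r : ℝ) - 1)) ≥ (r : ℝ) + 0.135) := by
  change r ≤ sqrtExpr r ∧ (3 ≤ r → r + 0.095 ≤ sqrtExpr r) ∧ (4 ≤ r → r + 0.135 ≤ sqrtExpr r)
  obtain rfl | rfl | rfl | h5 : r = 2 ∨ r = 3 ∨ r = 4 ∨ 5 ≤ r := by omega
  · refine ⟨?_, by omega, by omega⟩
    norm_num [sqrtExpr_two]
  · refine ⟨?_, fun _ => ?_, by omega⟩ <;> norm_num <;> linarith [sqrtExpr_three]
  · refine ⟨?_, fun _ => ?_, fun _ => ?_⟩ <;> norm_num <;> linarith [sqrtExpr_four]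
  · have h := sqrtExpr_ge_of_five_le (x := r) (by exact_mod_cast h5)
    exact ⟨by linarith, fun _ => by linarith, fun _ => h⟩
end

section
/- Let r ≥ 2 be an integer and let a_1, ..., a_r be r points in ℝ^d that are pairwise at Euclidean distance 2 (a regular simplex of side length 2). Then the optimal 1-median cost min_c ∑_i ‖a_i - c‖ equals √2 · √(r(r-1)). -/
/-!
Let `c₀` be the centroid and `R := ‖a i - c₀‖`. For any `c`, Cauchy–Schwarz gives
`R * ‖a i - c‖ ≥ ⟪a i - c, a i - c₀⟫ = R ^ 2 + ⟪c₀ - c, a i - c₀⟫`, and the last terms sum to zero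
over `i`; hence `∑ i, ‖a i - c‖ ≥ r * R`, i.e. the centroid of any point set equidistant from its
centroid is a 1-median. For the regular simplex, the parallel-axis identity
`∑ j, ‖x - a j‖ ^ 2 = r * ‖x - c₀‖ ^ 2 + ∑ j, ‖a j - c₀‖ ^ 2` at `x = a i` has left side
`4 * (r - 1)` for every `i`; so the vertices are equidistant from `c₀` and `r * R ^ 2 = 2 * (r - 1)`,
whence `r * R = √2 * √(r * (r - 1))`.
-/

open Finset RealInnerProductSpace

theorem sum_sub_smul_sum_eq_zero {ι 𝕜 E : Type*} [Fintype ι] [DivisionRing 𝕜] [CharZero 𝕜]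
    [AddCommGroup E] [Module 𝕜 E] (a : ι → E) :
    ∑ i, (a i - (Fintype.card ι : 𝕜)⁻¹ • ∑ j, a j) = 0 := by
  rcases isEmpty_or_nonempty ι with _ | _
  · simp
  · rw [sum_sub_distrib, sum_const, card_univ, ← Nat.cast_smul_eq_nsmul 𝕜, smul_smul,
      mul_inv_cancel₀ (Nat.cast_ne_zero.2 Fintype.card_ne_zero), one_smul, sub_self]

section Median

variable {ι E : Type*} [Fintype ι] [NormedAddCommGroup E] [InnerProductSpace ℝ E]

theorem sum_norm_sub_sq_eq_of_sum_sub_eq_zero {a : ι → E} {c₀ : E}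
    (hc₀ : ∑ j, (a j - c₀) = 0) (x : E) :
    ∑ j, ‖x - a j‖ ^ 2 = Fintype.card ι * ‖x - c₀‖ ^ 2 + ∑ j, ‖a j - c₀‖ ^ 2 := by
  calc ∑ j, ‖x - a j‖ ^ 2
      = ∑ j, (‖x - c₀‖ ^ 2 - 2 * ⟪x - c₀, a j - c₀⟫ + ‖a j - c₀‖ ^ 2) :=
        sum_congr rfl fun j _ => by rw [← norm_sub_sq_real, sub_sub_sub_cancel_right]
    _ = Fintype.card ι * ‖x - c₀‖ ^ 2 + ∑ j, ‖a j - c₀‖ ^ 2 := by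
        rw [sum_add_distrib, sum_sub_distrib, ← mul_sum, ← inner_sum, hc₀, inner_zero_right,
          mul_zero, sub_zero, sum_const, card_univ, nsmul_eq_mul]

theorem sum_norm_sub_le_of_forall_norm_sub_eq {a : ι → E} {c₀ : E} {R : ℝ}
    (hc₀ : ∑ j, (a j - c₀) = 0) (hR : ∀ i, ‖a i - c₀‖ = R) (c : E) :
    ∑ i, ‖a i - c₀‖ ≤ ∑ i, ‖a i - c‖ := by
  rcases le_or_gt R 0 with hR0 | hRpos
  · calc ∑ i, ‖a i - c₀‖ ≤ ∑ _i : ι, (0 : ℝ) := sum_le_sum fun i _ => (hR i).trans_le hR0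
      _ ≤ ∑ i, ‖a i - c‖ := sum_le_sum fun i _ => norm_nonneg _
  have hpair : ∑ i, ⟪a i - c, a i - c₀⟫ = R * ∑ i, ‖a i - c₀‖ := by
    have hsplit : ∀ i, a i - c = (a i - c₀) + (c₀ - c) := fun i => by abel
    simp only [hsplit, inner_add_left, real_inner_self_eq_norm_sq, sum_add_distrib,
      ← inner_sum, hc₀, inner_zero_right, add_zero, hR, mul_sum, sq]
  have hcs : ∑ i, ⟪a i - c, a i - c₀⟫ ≤ R * ∑ i, ‖a i - c‖ := by
    rw [mul_sum]
    exact sum_le_sum fun i _ => (real_inner_le_norm _ _).trans_eq (by rw [hR, mul_comm])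
  exact le_of_mul_le_mul_left (hpair ▸ hcs) hRpos

theorem iInf_sum_norm_sub_eq_of_forall_norm_sub_eq {a : ι → E} {c₀ : E} {R : ℝ}
    (hc₀ : ∑ j, (a j - c₀) = 0) (hR : ∀ i, ‖a i - c₀‖ = R) :
    ⨅ c, ∑ i, ‖a i - c‖ = ∑ i, ‖a i - c₀‖ :=
  IsLeast.csInf_eq ⟨⟨c₀, rfl⟩, by
    rintro _ ⟨c, rfl⟩
    exact sum_norm_sub_le_of_forall_norm_sub_eq hc₀ hR c⟩

end Median

section Simplex

variable {ι E : Type*} [Fintype ι] [NormedAddCommGroup E]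

theorem sum_norm_sub_sq_of_pairwise_dist_eq {a : ι → E} {s : ℝ}
    (h : ∀ i j, i ≠ j → dist (a i) (a j) = s) (i : ι) :
    ∑ j, ‖a i - a j‖ ^ 2 = s ^ 2 * (Fintype.card ι - 1) := by
  classical
  have hterm : ∀ j, ‖a i - a j‖ ^ 2 = s ^ 2 - if i = j then s ^ 2 else 0 := fun j => by
    by_cases hij : i = j
    · simp [hij]
    · rw [if_neg hij, ← dist_eq_norm, h i j hij, sub_zero]
  simp only [hterm, sum_sub_distrib, sum_ite_eq, mem_univ, if_true, sum_const, card_univ,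
    nsmul_eq_mul]
  ring

theorem card_mul_norm_sub_sq_of_pairwise_dist_eq [InnerProductSpace ℝ E] {a : ι → E} {c₀ : E}
    {s : ℝ} (hc₀ : ∑ j, (a j - c₀) = 0) (h : ∀ i j, i ≠ j → dist (a i) (a j) = s) (i : ι) :
    Fintype.card ι * ‖a i - c₀‖ ^ 2 = s ^ 2 * (Fintype.card ι - 1) / 2 := by
  have hk (k : ι) := (sum_norm_sub_sq_eq_of_sum_sub_eq_zero hc₀ (a k)).symm.trans
    (sum_norm_sub_sq_of_pairwise_dist_eq h k)
  have hn : (0 : ℝ) < Fintype.card ι := by exact_mod_cast Fintype.card_pos_iff.2 ⟨i⟩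
  have htotal : ∑ j, ‖a j - c₀‖ ^ 2 = s ^ 2 * (Fintype.card ι - 1) / 2 := by
    have hsum := sum_congr rfl fun k (_ : k ∈ univ) => hk k
    simp only [sum_add_distrib, ← mul_sum, sum_const, card_univ, nsmul_eq_mul] at hsum
    refine mul_left_cancel₀ hn.ne' ?_
    linarith
  linarith [hk i]

end Simplex

theorem stmt13_general (r d : ℕ) (a : Fin r → EuclideanSpace ℝ (Fin d))
    (h : ∀ i j : Fin r, i ≠ j → dist (a i) (a j) = 2) :
    ⨅ c : EuclideanSpace ℝ (Fin d), ∑ i : Fin r, ‖a i - c‖ =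
      Real.sqrt 2 * Real.sqrt ((r : ℝ) * ((r : ℝ) - 1)) := by
  have hc₀ := sum_sub_smul_sum_eq_zero (𝕜 := ℝ) a
  rw [Fintype.card_fin] at hc₀
  have hR (i : Fin r) : ‖a i - (r : ℝ)⁻¹ • ∑ j, a j‖ = √(2 * (r - 1) / r) := by
    have hr : (0 : ℝ) < r := by exact_mod_cast i.pos
    have hsq := card_mul_norm_sub_sq_of_pairwise_dist_eq hc₀ h i
    rw [Fintype.card_fin] at hsq
    rw [← Real.sqrt_sq (norm_nonneg _)]
    congr 1
    rw [eq_div_iff hr.ne']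
    linarith
  rw [iInf_sum_norm_sub_eq_of_forall_norm_sub_eq hc₀ hR, sum_congr rfl fun i _ => hR i, sum_const,
    card_univ, Fintype.card_fin, nsmul_eq_mul]
  rcases r.eq_zero_or_pos with rfl | hr
  · simp
  nth_rw 1 [← Real.sqrt_sq (Nat.cast_nonneg r)]
  rw [← Real.sqrt_mul (sq_nonneg _), ← Real.sqrt_mul zero_le_two]
  congr 1
  field_simp

theorem stmt13 (r d : ℕ) (hr : 2 ≤ r) (a : Fin r → EuclideanSpace ℝ (Fin d))
    (h : ∀ i j : Fin r, i ≠ j → dist (a i) (a j) = 2) :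
    ⨅ c : EuclideanSpace ℝ (Fin d), ∑ i : Fin r, ‖a i - c‖ =
      Real.sqrt 2 * Real.sqrt ((r : ℝ) * ((r : ℝ) - 1)) :=
  stmt13_general r d a h
end
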